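/- arXiv:2205.03760 — 6 statements merged into one kernel-verified Lean document; each statement's English description precedes it below -/
import Mathlib

section
/- For every c ∈ E, the unique u ∈ H satisfying S*(S(u)) + γ·u = S*(c) is given explicitly by u = S*((γ·1 + M)⁻¹ · c), where (γ·1 + M)⁻¹ · c ∈ ℝ^n is regarded as an element of E. -/
/-!
For `γ > 0` the operator `T*T + γ` is injective, because `⟪u, T*Tu + γu⟫ = ‖Tu‖² + γ‖u‖²`.
Applied to `T = S*` this makes `SS* + γ`, whose matrix is `γ·1 + M`, invertible. The
push-through identity `(S*S + γ) S* = S* (SS* + γ)` then shows that `S*((γ·1 + M)⁻¹ c)` solves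
`S*S u + γ u = S* c`, and injectivity of `S*S + γ` makes it the only solution.
-/

open Matrix
open scoped RealInnerProductSpace

namespace ContinuousLinearMap

variable {E F : Type*} [NormedAddCommGroup E] [InnerProductSpace ℝ E] [CompleteSpace E]
  [NormedAddCommGroup F] [InnerProductSpace ℝ F] [CompleteSpace F]

theorem inner_adjoint_apply_add_smul_self (T : E →L[ℝ] F) (γ : ℝ) (u : E) :
    ⟪u, T.adjoint (T u) + γ • u⟫ = ‖T u‖ ^ 2 + γ * ‖u‖ ^ 2 := by
  rw [inner_add_right, adjoint_inner_right, real_inner_smul_right, real_inner_self_eq_norm_sq,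
    real_inner_self_eq_norm_sq]

theorem adjoint_apply_add_smul_injective (T : E →L[ℝ] F) {γ : ℝ} (hγ : 0 < γ) :
    Function.Injective fun u ↦ T.adjoint (T u) + γ • u := by
  intro u v (huv : T.adjoint (T u) + γ • u = T.adjoint (T v) + γ • v)
  have h : ⟪u - v, T.adjoint (T (u - v)) + γ • (u - v)⟫ = 0 := by
    rw [map_sub, map_sub, smul_sub, sub_add_sub_comm, huv, sub_self, inner_zero_right]
  rw [inner_adjoint_apply_add_smul_self] at h
  have : ‖u - v‖ ^ 2 = 0 := by nlinarith [sq_nonneg ‖T (u - v)‖, sq_nonneg ‖u - v‖]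
  simpa [sub_eq_zero] using this

end ContinuousLinearMap

namespace Matrix

variable {𝕜 H ι : Type*} [RCLike 𝕜] [Fintype ι] [DecidableEq ι]

theorem toEuclideanLin_eq_of_inner_adjoint_single [NormedAddCommGroup H] [InnerProductSpace 𝕜 H]
    [CompleteSpace H] (S : H →L[𝕜] EuclideanSpace 𝕜 ι) (M : Matrix ι ι 𝕜)
    (hM : ∀ i j, M i j = inner 𝕜 (S.adjoint (EuclideanSpace.single i 1))
      (S.adjoint (EuclideanSpace.single j 1))) :
    M.toEuclideanLin = (S ∘L S.adjoint : EuclideanSpace 𝕜 ι →ₗ[𝕜] EuclideanSpace 𝕜 ι) := by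
  let b := (EuclideanSpace.basisFun ι 𝕜).toBasis
  rw [toEuclideanLin_eq_toLin_orthonormal, ← toLin_toMatrix b b (S ∘L S.adjoint : _ →ₗ[𝕜] _)]
  congr 1
  ext i j
  rw [LinearMap.toMatrix_apply, hM, ContinuousLinearMap.adjoint_inner_left,
    EuclideanSpace.inner_single_left]
  simp [b]

theorem isUnit_of_injective_toEuclideanLin {A : Matrix ι ι 𝕜}
    (hA : Function.Injective A.toEuclideanLin) : IsUnit A := by
  rw [← mulVec_injective_iff_isUnit]
  intro x y hxy
  simpa using hA (congrArg (WithLp.toLp 2) hxy)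

theorem toEuclideanLin_apply_toEuclideanLin_nonsing_inv {A : Matrix ι ι 𝕜} (hA : IsUnit A)
    (c : EuclideanSpace 𝕜 ι) : A.toEuclideanLin (A⁻¹.toEuclideanLin c) = c := by
  change WithLp.toLp 2 (A *ᵥ A⁻¹ *ᵥ c.ofLp) = c
  rw [mulVec_mulVec, mul_nonsing_inv _ ((isUnit_iff_isUnit_det A).mp hA), one_mulVec]

end Matrix

/-- With `E = EuclideanSpace ℝ (Fin n)` and `M` the matrix of
`S ∘ S*` in the standard basis, for every `c ∈ E` the unique `u` solving
`S*(S(u)) + γ·u = S*(c)` is `u = S*((γ·1 + M)⁻¹ · c)`. -/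
theorem stmt_3 {H : Type*}
    [NormedAddCommGroup H] [InnerProductSpace ℝ H] [CompleteSpace H]
    {n : ℕ}
    (S : H →L[ℝ] EuclideanSpace ℝ (Fin n)) (γ : ℝ) (hγ : 0 < γ)
    (M : Matrix (Fin n) (Fin n) ℝ)
    (hM : ∀ i j, M i j =
      ⟪S.adjoint (EuclideanSpace.single i (1 : ℝ)),
        S.adjoint (EuclideanSpace.single j (1 : ℝ))⟫)
    (c : EuclideanSpace ℝ (Fin n)) (u : H)
    (hu : S.adjoint (S u) + γ • u = S.adjoint c) :
    u = S.adjoint ((EuclideanSpace.equiv (Fin n) ℝ).symm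
      ((γ • (1 : Matrix (Fin n) (Fin n) ℝ) + M)⁻¹ *ᵥ
        (EuclideanSpace.equiv (Fin n) ℝ c))) := by
  set A := γ • (1 : Matrix (Fin n) (Fin n) ℝ) + M
  have hA : ∀ w, A.toEuclideanLin w = S (S.adjoint w) + γ • w := by
    intro w
    simp [A, toEuclideanLin_eq_of_inner_adjoint_single S M hM, add_comm]
  have hA_inj : Function.Injective A.toEuclideanLin := by
    simpa only [funext hA, ContinuousLinearMap.adjoint_adjoint] using
      S.adjoint.adjoint_apply_add_smul_injective hγ
  set w := A⁻¹.toEuclideanLin c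
  have hw : A.toEuclideanLin w = c :=
    toEuclideanLin_apply_toEuclideanLin_nonsing_inv (isUnit_of_injective_toEuclideanLin hA_inj) c
  change u = S.adjoint w
  refine S.adjoint_apply_add_smul_injective hγ ?_
  change S.adjoint (S u) + γ • u = S.adjoint (S (S.adjoint w)) + γ • S.adjoint w
  rw [hu, ← map_smul, ← map_add, ← hA, hw]
end

section
/- Let C ⊆ E be nonempty and closed. Then there exists z† ∈ C minimizing z ↦ ⟨z, (γ·1 + M)⁻¹ · z⟩ over C; and for any such minimizer z†, the pair (u†, z†), where u† ∈ H is the unique solution of S*(S(u†)) + γ·u† = S*(z†), satisfies ‖S(u†) − z†‖² + γ‖u†‖² ≤ ‖S(u) − z‖² + γ‖u‖² for all u ∈ H and all z ∈ C. -/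
/-!
Write `v := (γ + S S*)⁻¹ z`; this is the vector `(γ·1 + M)⁻¹ z`, since `M` is the matrix of
`S S*`. Completing the square gives
`‖S u - z‖² + γ‖u‖² = γ⟪z, v⟫ + ‖S (u - S* v)‖² + γ‖u - S* v‖²`,
so for fixed `z` the cost is minimal, with value `γ⟪z, v⟫`, exactly at the solution `u = S* v` of
the normal equation. The joint minimization thus reduces to minimizing the positive definite
quadratic form `z ↦ ⟪z, (γ + S S*)⁻¹ z⟫` over `C`; this form is coercive, so it attains its
minimum on the closed set `C`.
-/

open Matrix Filter
open scoped RealInnerProductSpace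

section Tikhonov

variable {H F : Type*} [NormedAddCommGroup H] [InnerProductSpace ℝ H] [CompleteSpace H]
  [NormedAddCommGroup F] [InnerProductSpace ℝ F] [CompleteSpace F]

def tikhonovCost (S : H →L[ℝ] F) (γ : ℝ) (u : H) (z : F) : ℝ :=
  ‖S u - z‖ ^ 2 + γ * ‖u‖ ^ 2

lemma inner_adjoint_apply_add_smul_self (T : H →L[ℝ] F) (γ : ℝ) (x : H) :
    ⟪T.adjoint (T x) + γ • x, x⟫ = ‖T x‖ ^ 2 + γ * ‖x‖ ^ 2 := by
  rw [inner_add_left, ContinuousLinearMap.adjoint_inner_left, real_inner_smul_left,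
    real_inner_self_eq_norm_sq, real_inner_self_eq_norm_sq]

variable (S : H →L[ℝ] F) {γ : ℝ} {v z : F}

lemma tikhonovCost_eq (hv : S (S.adjoint v) + γ • v = z) (u : H) :
    tikhonovCost S γ u z =
      γ * ⟪z, v⟫ + (‖S (u - S.adjoint v)‖ ^ 2 + γ * ‖u - S.adjoint v‖ ^ 2) := by
  subst hv
  set d := u - S.adjoint v
  have hSu : S u - (S (S.adjoint v) + γ • v) = S d - γ • v := by
    rw [map_sub]; abel
  have hu : u = d + S.adjoint v := (sub_add_cancel u _).symm
  rw [tikhonovCost, hSu, hu, norm_sub_sq_real, norm_add_sq_real, inner_add_left,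
    real_inner_smul_right, real_inner_smul_left, ← ContinuousLinearMap.adjoint_inner_right,
    ← ContinuousLinearMap.adjoint_inner_right, norm_smul, real_inner_self_eq_norm_sq,
    real_inner_self_eq_norm_sq, Real.norm_eq_abs, mul_pow, sq_abs]
  ring

lemma mul_inner_le_tikhonovCost (hγ : 0 ≤ γ) (hv : S (S.adjoint v) + γ • v = z) (u : H) :
    γ * ⟪z, v⟫ ≤ tikhonovCost S γ u z := by
  rw [tikhonovCost_eq S hv]
  have : 0 ≤ ‖S (u - S.adjoint v)‖ ^ 2 + γ * ‖u - S.adjoint v‖ ^ 2 := by positivity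
  linarith

lemma tikhonovCost_eq_of_normal_eq (hv : S (S.adjoint v) + γ • v = z) {u : H}
    (hu : S.adjoint (S u) + γ • u = S.adjoint z) : tikhonovCost S γ u z = γ * ⟪z, v⟫ := by
  have hd : S.adjoint (S (u - S.adjoint v)) + γ • (u - S.adjoint v) = 0 := by
    rw [map_sub, map_sub, smul_sub, sub_add_sub_comm, hu, ← hv]
    simp only [map_add, map_smul, sub_self]
  rw [tikhonovCost_eq S hv, ← inner_adjoint_apply_add_smul_self, hd, inner_zero_left, add_zero]

end Tikhonov

lemma IsClosed.exists_isMinOn_of_tendsto_cocompact {X α : Type*} [TopologicalSpace X]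
    [LinearOrder α] [TopologicalSpace α] [ClosedIicTopology α] {f : X → α} (hf : Continuous f)
    (hf_coer : Tendsto f (cocompact X) atTop) {C : Set X} (hC : IsClosed C)
    (hne : C.Nonempty) : ∃ x ∈ C, IsMinOn f C x :=
  let ⟨_, hx₀⟩ := hne
  hf.continuousOn.exists_isMinOn' hC hx₀
    ((hf_coer.eventually_ge_atTop _).filter_mono inf_le_left)

lemma tendsto_inner_symm_apply_cocompact {F : Type*} [NormedAddCommGroup F]
    [InnerProductSpace ℝ F] [ProperSpace F] (A : F ≃L[ℝ] F) {γ : ℝ} (hγ : 0 < γ)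
    (hA : ∀ v, γ * ‖v‖ ^ 2 ≤ ⟪A v, v⟫) :
    Tendsto (fun z ↦ ⟪z, A.symm z⟫) (cocompact F) atTop := by
  have hnorm : Tendsto (fun z ↦ γ * ‖A.symm z‖ ^ 2) (cocompact F) atTop :=
    ((tendsto_pow_atTop two_ne_zero).comp
      (tendsto_norm_cocompact_atTop.comp A.symm.toHomeomorph.map_cocompact.le)).const_mul_atTop hγ
  refine tendsto_atTop_mono (fun z ↦ ?_) hnorm
  simpa [real_inner_comm] using hA (A.symm z)

lemma Matrix.toEuclideanCLM_gram_adjoint {ι 𝕜 H : Type*} [Fintype ι] [DecidableEq ι] [RCLike 𝕜]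
    [NormedAddCommGroup H] [InnerProductSpace 𝕜 H] [CompleteSpace H]
    (S : H →L[𝕜] EuclideanSpace 𝕜 ι) :
    toEuclideanCLM (n := ι) (𝕜 := 𝕜) (gram 𝕜 fun i ↦ S.adjoint (EuclideanSpace.single i 1)) =
      S ∘L S.adjoint := by
  refine ContinuousLinearMap.coe_injective ((EuclideanSpace.basisFun ι 𝕜).toBasis.ext fun j ↦ ?_)
  ext i
  simp [gram, ContinuousLinearMap.adjoint_inner_left, EuclideanSpace.inner_single_left]

noncomputable def Matrix.toEuclideanCLE {ι 𝕜 : Type*} [Fintype ι] [DecidableEq ι] [RCLike 𝕜]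
    (B : Matrix ι ι 𝕜) (hB : IsUnit B.det) : EuclideanSpace 𝕜 ι ≃L[𝕜] EuclideanSpace 𝕜 ι :=
  .equivOfInverse (toEuclideanCLM (𝕜 := 𝕜) B) (toEuclideanCLM (𝕜 := 𝕜) B⁻¹)
    (fun v ↦ by rw [← mul_apply_eq_comp, ← map_mul, nonsing_inv_mul B hB, map_one,
      one_apply_eq_self])
    (fun v ↦ by rw [← mul_apply_eq_comp, ← map_mul, mul_nonsing_inv B hB, map_one,
      one_apply_eq_self])

/-- For nonempty closed `C ⊆ E`, there exists `z† ∈ C`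
minimizing `z ↦ ⟨z, (γ·1 + M)⁻¹·z⟩` over `C`; and for any such minimizer `z†`,
the pair `(u†, z†)` with `S*(S(u†)) + γ·u† = S*(z†)` minimizes
`‖S(u) − z‖² + γ‖u‖²` over all `u ∈ H`, `z ∈ C`. -/
theorem stmt_7 {H : Type*}
    [NormedAddCommGroup H] [InnerProductSpace ℝ H] [CompleteSpace H]
    {n : ℕ}
    (S : H →L[ℝ] EuclideanSpace ℝ (Fin n)) (γ : ℝ) (hγ : 0 < γ)
    (M : Matrix (Fin n) (Fin n) ℝ)
    (hM : ∀ i j, M i j =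
      ⟪S.adjoint (EuclideanSpace.single i (1 : ℝ)),
        S.adjoint (EuclideanSpace.single j (1 : ℝ))⟫)
    (C : Set (EuclideanSpace ℝ (Fin n))) (hCne : C.Nonempty)
    (hCcl : IsClosed C) :
    (∃ zd ∈ C, ∀ z ∈ C,
      ⟪zd, (EuclideanSpace.equiv (Fin n) ℝ).symm
          ((γ • (1 : Matrix (Fin n) (Fin n) ℝ) + M)⁻¹ *ᵥ
            (EuclideanSpace.equiv (Fin n) ℝ zd))⟫ ≤
        ⟪z, (EuclideanSpace.equiv (Fin n) ℝ).symm
          ((γ • (1 : Matrix (Fin n) (Fin n) ℝ) + M)⁻¹ *ᵥ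
            (EuclideanSpace.equiv (Fin n) ℝ z))⟫) ∧
    (∀ zd ∈ C,
      (∀ z ∈ C,
        ⟪zd, (EuclideanSpace.equiv (Fin n) ℝ).symm
            ((γ • (1 : Matrix (Fin n) (Fin n) ℝ) + M)⁻¹ *ᵥ
              (EuclideanSpace.equiv (Fin n) ℝ zd))⟫ ≤
          ⟪z, (EuclideanSpace.equiv (Fin n) ℝ).symm
            ((γ • (1 : Matrix (Fin n) (Fin n) ℝ) + M)⁻¹ *ᵥ
              (EuclideanSpace.equiv (Fin n) ℝ z))⟫) →
      ∀ ud : H, S.adjoint (S ud) + γ • ud = S.adjoint zd →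
        ∀ u : H, ∀ z ∈ C,
          ‖S ud - zd‖ ^ 2 + γ * ‖ud‖ ^ 2 ≤ ‖S u - z‖ ^ 2 + γ * ‖u‖ ^ 2) := by
  set B := γ • (1 : Matrix (Fin n) (Fin n) ℝ) + M
  have hM_gram : M = gram ℝ fun i ↦ S.adjoint (EuclideanSpace.single i 1) := Matrix.ext hM
  have hB : B.PosDef := (PosDef.one.smul hγ).add_posSemidef (hM_gram ▸ posSemidef_gram ℝ _)
  have hB_op : ∀ v, toEuclideanCLM (𝕜 := ℝ) B v = S (S.adjoint v) + γ • v := fun v ↦ by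
    simp [B, hM_gram, toEuclideanCLM_gram_adjoint, add_comm]
  -- `A.symm z` is definitionally the vector `(γ • 1 + M)⁻¹ *ᵥ z` of the statement.
  let A := toEuclideanCLE B ((isUnit_iff_isUnit_det B).mp hB.isUnit)
  have hA_symm : ∀ z, S (S.adjoint (A.symm z)) + γ • A.symm z = z := fun z ↦ by
    rw [← hB_op]; exact A.apply_symm_apply z
  have hA_coer : ∀ v, γ * ‖v‖ ^ 2 ≤ ⟪A v, v⟫ := fun v ↦ by
    have h := inner_adjoint_apply_add_smul_self S.adjoint γ v
    rw [ContinuousLinearMap.adjoint_adjoint, ← hB_op] at h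
    exact h ▸ le_add_of_nonneg_left (sq_nonneg _)
  refine ⟨?_, fun zd _ hzd_min ud hud u z hz ↦ ?_⟩
  · exact hCcl.exists_isMinOn_of_tendsto_cocompact (continuous_id.inner A.symm.continuous)
      (tendsto_inner_symm_apply_cocompact A hγ hA_coer) hCne
  · calc ‖S ud - zd‖ ^ 2 + γ * ‖ud‖ ^ 2 = γ * ⟪zd, A.symm zd⟫ :=
          tikhonovCost_eq_of_normal_eq S (hA_symm zd) hud
      _ ≤ γ * ⟪z, A.symm z⟫ := mul_le_mul_of_nonneg_left (hzd_min z hz) hγ.le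
      _ ≤ ‖S u - z‖ ^ 2 + γ * ‖u‖ ^ 2 := mul_inner_le_tikhonovCost S hγ.le (hA_symm z) u
end

section
/- For every z ∈ ℝ^n, let u† := Σ_{j=1}^m (Θ⁻¹·Aᵀ·(γ·1 + Q)⁻¹·z)_j · g_j ∈ H and v := Σ_{i=1}^n ((γ·1 + G)⁻¹·z)_i · k_i ∈ H. Then ‖u† − v‖² ≤ 3·‖(γ·1 + Q)⁻¹ − (γ·1 + G)⁻¹‖·‖z‖². -/
/-!
Put `x = (γ1 + Q)⁻¹z` and `y = (γ1 + G)⁻¹z`. Expanding `‖u† - v‖²` through the Gram matrices and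
using `ΘΘ⁻¹ = 1` gives `xᵀQx - 2yᵀQx + yᵀGy`. Substituting `Qx = z - γx` and `Gy = z - γy` turns
this into `zᵀ((γ1 + Q)⁻¹ - (γ1 + G)⁻¹)z - γ‖x - y‖²`, which is at most
`‖(γ1 + Q)⁻¹ - (γ1 + G)⁻¹‖‖z‖²`.
-/

open Matrix
open scoped Matrix.Norms.L2Operator RealInnerProductSpace

lemma Matrix.PosSemidef.isUnit_det_smul_one_add {ι : Type*} [Fintype ι] [DecidableEq ι]
    {P : Matrix ι ι ℝ} (hP : P.PosSemidef) {γ : ℝ} (hγ : 0 < γ) : IsUnit (γ • 1 + P).det :=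
  (isUnit_iff_isUnit_det _).mp ((PosDef.one.smul hγ).add_posSemidef hP).isUnit

section
variable {ι κ : Type*} [Fintype ι] [Fintype κ]

lemma dotProduct_mul_mul_transpose_mulVec (A : Matrix ι κ ℝ) (M : Matrix κ κ ℝ) (x y : ι → ℝ) :
    y ⬝ᵥ ((A * M * Aᵀ) *ᵥ x) = (Aᵀ *ᵥ y) ⬝ᵥ (M *ᵥ (Aᵀ *ᵥ x)) := by
  rw [← mulVec_mulVec, ← mulVec_mulVec, dotProduct_mulVec, mulVec_transpose A y]

variable [DecidableEq ι]

lemma mulVec_nonsing_inv_mulVec {M : Matrix ι ι ℝ} (hM : IsUnit M.det) (z : ι → ℝ) :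
    M *ᵥ (M⁻¹ *ᵥ z) = z := by
  rw [mulVec_mulVec, mul_nonsing_inv _ hM, one_mulVec]

lemma dotProduct_mulVec_le_l2_opNorm_mul (D : Matrix ι ι ℝ) (z : ι → ℝ) :
    z ⬝ᵥ (D *ᵥ z) ≤ ‖D‖ * (z ⬝ᵥ z) := by
  set w : EuclideanSpace ℝ ι := WithLp.toLp 2 z
  have hw : ‖w‖ * ‖w‖ = z ⬝ᵥ z := by
    rw [← real_inner_self_eq_norm_mul_norm, EuclideanSpace.inner_toLp_toLp, star_trivial]
  calc z ⬝ᵥ (D *ᵥ z) = ⟪w, (EuclideanSpace.equiv ι ℝ).symm (D *ᵥ w)⟫ := by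
        rw [EuclideanSpace.inner_toLp_toLp, star_trivial, dotProduct_comm]; rfl
    _ ≤ ‖w‖ * (‖D‖ * ‖w‖) := (real_inner_le_norm _ _).trans <|
        mul_le_mul_of_nonneg_left (l2_opNorm_mulVec D w) (norm_nonneg _)
    _ = ‖D‖ * (z ⬝ᵥ z) := by rw [← hw]; ring

lemma mulVec_eq_sub_smul_of_smul_one_add_mulVec_eq {P : Matrix ι ι ℝ} {γ : ℝ} {x z : ι → ℝ}
    (h : (γ • 1 + P) *ᵥ x = z) : P *ᵥ x = z - γ • x := by
  rw [← h, add_mulVec, smul_mulVec, one_mulVec, add_sub_cancel_left]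

lemma dotProduct_mulVec_resolvent_identity {Q G : Matrix ι ι ℝ} {γ : ℝ} {x y z : ι → ℝ}
    (hx : (γ • 1 + Q) *ᵥ x = z) (hy : (γ • 1 + G) *ᵥ y = z) :
    x ⬝ᵥ (Q *ᵥ x) - 2 * (y ⬝ᵥ (Q *ᵥ x)) + y ⬝ᵥ (G *ᵥ y) =
      (x - y) ⬝ᵥ z - γ * ((x - y) ⬝ᵥ (x - y)) := by
  rw [mulVec_eq_sub_smul_of_smul_one_add_mulVec_eq hx,
    mulVec_eq_sub_smul_of_smul_one_add_mulVec_eq hy]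
  simp only [dotProduct_sub, sub_dotProduct, dotProduct_smul, smul_eq_mul, dotProduct_comm y x]
  ring

end

section
variable {ι κ H : Type*} [Fintype ι] [Fintype κ] [NormedAddCommGroup H] [InnerProductSpace ℝ H]

lemma inner_sum_smul_sum_smul {f : ι → H} {h : κ → H} {M : Matrix ι κ ℝ}
    (hM : ∀ i j, M i j = ⟪f i, h j⟫) (a : ι → ℝ) (b : κ → ℝ) :
    ⟪∑ i, a i • f i, ∑ j, b j • h j⟫ = a ⬝ᵥ (M *ᵥ b) := by
  simp only [sum_inner, inner_sum, real_inner_smul_left, real_inner_smul_right, dotProduct,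
    mulVec, hM, Finset.mul_sum]
  rw [Finset.sum_comm]
  exact Finset.sum_congr rfl fun i _ => Finset.sum_congr rfl fun j _ => by ring

variable {g : κ → H} {k : ι → H} {Θ : Matrix κ κ ℝ} {A : Matrix ι κ ℝ} {G : Matrix ι ι ℝ}

lemma norm_sum_smul_sub_sum_smul_sq (hΘ : ∀ i j, Θ i j = ⟪g i, g j⟫)
    (hA : ∀ i j, A i j = ⟪k i, g j⟫) (hG : ∀ i j, G i j = ⟪k i, k j⟫) (a : κ → ℝ) (c : ι → ℝ) :
    ‖∑ j, a j • g j - ∑ i, c i • k i‖ ^ 2 =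
      a ⬝ᵥ (Θ *ᵥ a) - 2 * (c ⬝ᵥ (A *ᵥ a)) + c ⬝ᵥ (G *ᵥ c) := by
  rw [norm_sub_sq_real, ← real_inner_comm, ← real_inner_self_eq_norm_sq,
    ← real_inner_self_eq_norm_sq, inner_sum_smul_sum_smul hΘ, inner_sum_smul_sum_smul hA,
    inner_sum_smul_sum_smul hG]

lemma norm_sum_inv_mulVec_smul_sub_sum_smul_sq [DecidableEq κ] (hΘ : ∀ i j, Θ i j = ⟪g i, g j⟫)
    (hΘunit : IsUnit Θ.det) (hA : ∀ i j, A i j = ⟪k i, g j⟫) (hG : ∀ i j, G i j = ⟪k i, k j⟫)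
    (x y : ι → ℝ) :
    ‖∑ j, (Θ⁻¹ *ᵥ (Aᵀ *ᵥ x)) j • g j - ∑ i, y i • k i‖ ^ 2 =
      x ⬝ᵥ ((A * Θ⁻¹ * Aᵀ) *ᵥ x) - 2 * (y ⬝ᵥ ((A * Θ⁻¹ * Aᵀ) *ᵥ x)) + y ⬝ᵥ (G *ᵥ y) := by
  rw [norm_sum_smul_sub_sum_smul_sq hΘ hA hG, mulVec_nonsing_inv_mulVec hΘunit, dotProduct_comm,
    ← dotProduct_mul_mul_transpose_mulVec, mulVec_mulVec, mulVec_mulVec]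

end

theorem stmt_9_general {H : Type*}
    [NormedAddCommGroup H] [InnerProductSpace ℝ H]
    {n m : ℕ} (k : Fin n → H) (g : Fin m → H)
    (hg : LinearIndependent ℝ g)
    (G : Matrix (Fin n) (Fin n) ℝ) (hG : ∀ i j, G i j = ⟪k i, k j⟫)
    (Θ : Matrix (Fin m) (Fin m) ℝ) (hΘ : ∀ i j, Θ i j = ⟪g i, g j⟫)
    (A : Matrix (Fin n) (Fin m) ℝ) (hA : ∀ i j, A i j = ⟪k i, g j⟫)
    (Q : Matrix (Fin n) (Fin n) ℝ) (hQ : Q = A * Θ⁻¹ * Aᵀ)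
    (γ : ℝ) (hγ : 0 < γ)
    (z : Fin n → ℝ) (ud v : H)
    (hud : ud = ∑ j, ((Θ⁻¹ * Aᵀ *
      (γ • (1 : Matrix (Fin n) (Fin n) ℝ) + Q)⁻¹) *ᵥ z) j • g j)
    (hv : v = ∑ i, (((γ • (1 : Matrix (Fin n) (Fin n) ℝ) + G)⁻¹) *ᵥ z) i • k i) :
    ‖ud - v‖ ^ 2 ≤
      3 * ‖(γ • (1 : Matrix (Fin n) (Fin n) ℝ) + Q)⁻¹ -
            (γ • (1 : Matrix (Fin n) (Fin n) ℝ) + G)⁻¹‖ * (z ⬝ᵥ z) := by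
  have hΘgram : Θ = gram ℝ g := Matrix.ext hΘ
  have hΘunit : IsUnit Θ.det :=
    (isUnit_iff_isUnit_det _).mp (hΘgram ▸ posDef_gram_of_linearIndependent hg).isUnit
  have hQpsd : Q.PosSemidef := by
    simpa only [hQ, conjTranspose_eq_transpose_of_trivial] using
      (hΘgram ▸ posSemidef_gram ℝ g).inv.mul_mul_conjTranspose_same A
  have hGpsd : G.PosSemidef := (Matrix.ext hG : G = gram ℝ k) ▸ posSemidef_gram ℝ k
  set B := γ • (1 : Matrix (Fin n) (Fin n) ℝ) + Q
  set C := γ • (1 : Matrix (Fin n) (Fin n) ℝ) + G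
  set x := B⁻¹ *ᵥ z
  set y := C⁻¹ *ᵥ z
  have hnorm : ‖ud - v‖ ^ 2 = x ⬝ᵥ (Q *ᵥ x) - 2 * (y ⬝ᵥ (Q *ᵥ x)) + y ⬝ᵥ (G *ᵥ y) := by
    rw [hud, hv, ← mulVec_mulVec, ← mulVec_mulVec,
      norm_sum_inv_mulVec_smul_sub_sum_smul_sq hΘ hΘunit hA hG, ← hQ]
  calc ‖ud - v‖ ^ 2 = (x - y) ⬝ᵥ z - γ * ((x - y) ⬝ᵥ (x - y)) := by
        rw [hnorm, dotProduct_mulVec_resolvent_identity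
          (mulVec_nonsing_inv_mulVec (hQpsd.isUnit_det_smul_one_add hγ) z)
          (mulVec_nonsing_inv_mulVec (hGpsd.isUnit_det_smul_one_add hγ) z)]
    _ ≤ z ⬝ᵥ ((B⁻¹ - C⁻¹) *ᵥ z) := by
        rw [sub_mulVec, dotProduct_comm]
        exact sub_le_self _ (mul_nonneg hγ.le (by simpa using dotProduct_star_self_nonneg (x - y)))
    _ ≤ ‖B⁻¹ - C⁻¹‖ * (z ⬝ᵥ z) := dotProduct_mulVec_le_l2_opNorm_mul _ _
    _ ≤ 3 * ‖B⁻¹ - C⁻¹‖ * (z ⬝ᵥ z) := by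
        rw [mul_assoc]
        exact le_mul_of_one_le_left
          (mul_nonneg (norm_nonneg _) (by simpa using dotProduct_star_self_nonneg z)) (by norm_num)

/-- With `u† = ∑ⱼ (Θ⁻¹Aᵀ(γ1+Q)⁻¹z)ⱼ gⱼ` and
`v = ∑ᵢ ((γ1+G)⁻¹z)ᵢ kᵢ`, one has
`‖u† − v‖² ≤ 3‖(γ1+Q)⁻¹ − (γ1+G)⁻¹‖‖z‖²`. -/
theorem stmt_9 {H : Type*}
    [NormedAddCommGroup H] [InnerProductSpace ℝ H] [CompleteSpace H]
    {n m : ℕ} (k : Fin n → H) (g : Fin m → H)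
    (hk : LinearIndependent ℝ k) (hg : LinearIndependent ℝ g)
    (G : Matrix (Fin n) (Fin n) ℝ) (hG : ∀ i j, G i j = ⟪k i, k j⟫)
    (Θ : Matrix (Fin m) (Fin m) ℝ) (hΘ : ∀ i j, Θ i j = ⟪g i, g j⟫)
    (A : Matrix (Fin n) (Fin m) ℝ) (hA : ∀ i j, A i j = ⟪k i, g j⟫)
    (Q : Matrix (Fin n) (Fin n) ℝ) (hQ : Q = A * Θ⁻¹ * Aᵀ)
    (γ : ℝ) (hγ : 0 < γ)
    (z : Fin n → ℝ) (ud v : H)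
    (hud : ud = ∑ j, ((Θ⁻¹ * Aᵀ *
      (γ • (1 : Matrix (Fin n) (Fin n) ℝ) + Q)⁻¹) *ᵥ z) j • g j)
    (hv : v = ∑ i, (((γ • (1 : Matrix (Fin n) (Fin n) ℝ) + G)⁻¹) *ᵥ z) i • k i) :
    ‖ud - v‖ ^ 2 ≤
      3 * ‖(γ • (1 : Matrix (Fin n) (Fin n) ℝ) + Q)⁻¹ -
            (γ • (1 : Matrix (Fin n) (Fin n) ℝ) + G)⁻¹‖ * (z ⬝ᵥ z) :=
  stmt_9_general k g hg G hG Θ hΘ A hA Q hQ γ hγ z ud v hud hv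
end

section
/- For all z, b ∈ ℝ^n, let v := Σ_{i=1}^n ((γ·1 + G)⁻¹·z)_i · k_i ∈ H and û := Σ_{i=1}^n ((γ·1 + G)⁻¹·b)_i · k_i ∈ H. Then ‖v − û‖² ≤ (z − b)ᵀG⁻¹(z − b). -/
open Matrix
open scoped RealInnerProductSpace

/-! With `A = γ • 1 + G` and `c = A⁻¹ (z - b)`, the vector `v - û` is `∑ cᵢ kᵢ`, so
`‖v - û‖² = cᵀ G c`, while `(z - b)ᵀ G⁻¹ (z - b) = cᵀ A G⁻¹ A c = γ² cᵀ G⁻¹ c + 2γ cᵀ c + cᵀ G c`.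
The two extra terms are nonnegative because `G⁻¹` is positive definite and `γ > 0`. -/

theorem norm_sum_smul_sq_eq_dotProduct_gram_mulVec {ι E : Type*} [Fintype ι]
    [NormedAddCommGroup E] [InnerProductSpace ℝ E] (v : ι → E) (c : ι → ℝ) :
    ‖∑ i, c i • v i‖ ^ 2 = c ⬝ᵥ (gram ℝ v *ᵥ c) := by
  rw [← real_inner_self_eq_norm_sq, ← star_dotProduct_gram_mulVec, star_trivial]

namespace Matrix.PosDef

variable {ι : Type*} [Fintype ι] [DecidableEq ι] {G : Matrix ι ι ℝ}

theorem inv_mulVec_smul_one_add_mulVec (hG : G.PosDef) (γ : ℝ) (c : ι → ℝ) :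
    G⁻¹ *ᵥ ((γ • 1 + G) *ᵥ c) = γ • G⁻¹ *ᵥ c + c := by
  rw [mulVec_mulVec, mul_add, Matrix.mul_smul, mul_one, nonsing_inv_mul _ hG.det_pos.ne'.isUnit,
    add_mulVec, smul_mulVec, one_mulVec]

theorem mulVec_dotProduct_inv_mulVec (hG : G.PosDef) (c : ι → ℝ) :
    (G *ᵥ c) ⬝ᵥ (G⁻¹ *ᵥ c) = c ⬝ᵥ c := by
  have hsymm : G *ᵥ c = c ᵥ* G := by
    rw [← mulVec_transpose, ← conjTranspose_eq_transpose_of_trivial, hG.isHermitian.eq]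
  rw [hsymm, ← dotProduct_mulVec, mulVec_mulVec, mul_nonsing_inv _ hG.det_pos.ne'.isUnit,
    one_mulVec]

theorem dotProduct_mulVec_le_smul_one_add_mulVec_dotProduct_inv_mulVec (hG : G.PosDef)
    {γ : ℝ} (hγ : 0 ≤ γ) (c : ι → ℝ) :
    c ⬝ᵥ (G *ᵥ c) ≤ ((γ • 1 + G) *ᵥ c) ⬝ᵥ (G⁻¹ *ᵥ ((γ • 1 + G) *ᵥ c)) := by
  have hexpand : ((γ • 1 + G) *ᵥ c) ⬝ᵥ (G⁻¹ *ᵥ ((γ • 1 + G) *ᵥ c)) =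
      γ ^ 2 * (c ⬝ᵥ (G⁻¹ *ᵥ c)) + 2 * γ * (c ⬝ᵥ c) + c ⬝ᵥ (G *ᵥ c) := by
    rw [inv_mulVec_smul_one_add_mulVec hG, add_mulVec, smul_mulVec, one_mulVec]
    simp only [add_dotProduct, dotProduct_add, smul_dotProduct, dotProduct_smul, smul_eq_mul,
      mulVec_dotProduct_inv_mulVec hG, dotProduct_comm (G *ᵥ c) c]
    ring
  have hinv : 0 ≤ c ⬝ᵥ (G⁻¹ *ᵥ c) := by
    simpa using hG.posSemidef.inv.dotProduct_mulVec_nonneg c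
  have hself : 0 ≤ c ⬝ᵥ c := by simpa using dotProduct_star_self_nonneg c
  rw [hexpand]
  nlinarith [mul_nonneg (sq_nonneg γ) hinv, mul_nonneg hγ hself]

end Matrix.PosDef

/-- With `v = ∑ᵢ ((γ1+G)⁻¹z)ᵢ kᵢ` and
`û = ∑ᵢ ((γ1+G)⁻¹b)ᵢ kᵢ`, one has `‖v − û‖² ≤ (z−b)ᵀG⁻¹(z−b)`. -/
theorem stmt_10 {H : Type*}
    [NormedAddCommGroup H] [InnerProductSpace ℝ H]
    {n : ℕ} (k : Fin n → H) (hk : LinearIndependent ℝ k)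
    (G : Matrix (Fin n) (Fin n) ℝ) (hG : ∀ i j, G i j = ⟪k i, k j⟫)
    (γ : ℝ) (hγ : 0 < γ)
    (z b : Fin n → ℝ) (v uhat : H)
    (hv : v = ∑ i, (((γ • (1 : Matrix (Fin n) (Fin n) ℝ) + G)⁻¹) *ᵥ z) i • k i)
    (huhat : uhat =
      ∑ i, (((γ • (1 : Matrix (Fin n) (Fin n) ℝ) + G)⁻¹) *ᵥ b) i • k i) :
    ‖v - uhat‖ ^ 2 ≤ (z - b) ⬝ᵥ (G⁻¹ *ᵥ (z - b)) := by
  have hGram : G = gram ℝ k := Matrix.ext hG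
  have hGpd : G.PosDef := hGram ▸ posDef_gram_of_linearIndependent hk
  set A := γ • (1 : Matrix (Fin n) (Fin n) ℝ) + G
  have hApd : A.PosDef := by
    simpa only [A, add_comm] using hGpd.add_posSemidef (PosSemidef.one.smul hγ.le)
  set c := A⁻¹ *ᵥ (z - b)
  have hzb : z - b = A *ᵥ c := by
    rw [mulVec_mulVec, mul_nonsing_inv _ hApd.det_pos.ne'.isUnit, one_mulVec]
  have hvu : v - uhat = ∑ i, c i • k i := by
    simp only [hv, huhat, c, mulVec_sub, Pi.sub_apply, sub_smul, Finset.sum_sub_distrib]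
  calc ‖v - uhat‖ ^ 2 = c ⬝ᵥ (G *ᵥ c) := by
        rw [hvu, norm_sum_smul_sq_eq_dotProduct_gram_mulVec, hGram]
    _ ≤ (z - b) ⬝ᵥ (G⁻¹ *ᵥ (z - b)) := by
        rw [hzb]
        exact hGpd.dotProduct_mulVec_le_smul_one_add_mulVec_dotProduct_inv_mulVec hγ.le c
end

section
/- The spectral norm of the Nyström residual matrix equals the worst-case approximation error: ‖G − A·Θ⁻¹·Aᵀ‖ = sup_{β ∈ ℝ^n, ‖β‖ ≤ 1} inf_{v ∈ span{g_1, …, g_m}} ‖v − Σ_{i=1}^n β_i k_i‖². -/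
open Matrix
open scoped Matrix.Norms.L2Operator RealInnerProductSpace

/-!
For `u = ∑ βᵢ kᵢ`, the best approximation of `u` from `span g` is `∑ cⱼ gⱼ` with `c` solving the
normal equations `Θ c = Aᵀ β`, so the squared distance is
`‖u‖² - (Aᵀβ)ᵀ Θ⁻¹ (Aᵀβ) = βᵀ (G - A Θ⁻¹ Aᵀ) β`.
The residual matrix is therefore positive semidefinite, and the spectral norm of a positive
semidefinite matrix is the supremum of its quadratic form over the unit ball.
-/

namespace ContinuousLinearMap

variable {𝕜 E : Type*} [RCLike 𝕜] [NormedAddCommGroup E] [InnerProductSpace 𝕜 E]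

theorem reApplyInnerSelf_le_norm_mul_sq (T : E →L[𝕜] E) (x : E) :
    T.reApplyInnerSelf x ≤ ‖T‖ * ‖x‖ ^ 2 := by
  grw [reApplyInnerSelf_apply, RCLike.re_le_norm, norm_inner_le_norm, le_opNorm, mul_assoc, ← sq]

theorem IsPositive.norm_eq_iSup_reApplyInnerSelf {T : E →L[𝕜] E} (hT : T.IsPositive) :
    ‖T‖ = ⨆ x : {x : E // ‖x‖ ≤ 1}, T.reApplyInnerSelf x := by
  have le_norm (x : {x : E // ‖x‖ ≤ 1}) : T.reApplyInnerSelf x ≤ ‖T‖ := by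
    grw [reApplyInnerSelf_le_norm_mul_sq, x.2]
    simp
  have bdd : BddAbove (Set.range fun x : {x : E // ‖x‖ ≤ 1} ↦ T.reApplyInnerSelf x) :=
    ⟨‖T‖, Set.forall_mem_range.mpr le_norm⟩
  have : Nonempty {x : E // ‖x‖ ≤ 1} := ⟨⟨0, by simp⟩⟩
  refine le_antisymm ?_ (ciSup_le le_norm)
  rw [norm_eq_iSup_rayleighQuotient T hT.isSymmetric]
  refine ciSup_le fun x ↦ ?_
  rcases eq_or_ne x 0 with rfl | hx
  · rw [rayleighQuotient_apply_zero, abs_zero]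
    exact le_ciSup_of_le bdd ⟨0, by simp⟩ (by simp [reApplyInnerSelf_apply])
  have hunit : ‖(‖x‖⁻¹ : 𝕜) • x‖ = 1 := by
    simp [norm_smul, hx]
  rw [← rayleigh_smul T x (c := (‖x‖⁻¹ : 𝕜)) (by simpa using hx), rayleighQuotient, hunit,
    one_pow, div_one, abs_of_nonneg (hT.2 _)]
  exact le_ciSup bdd ⟨_, hunit.le⟩

end ContinuousLinearMap

theorem EuclideanSpace.norm_eq_sqrt_dotProduct {ι : Type*} [Fintype ι] (x : EuclideanSpace ℝ ι) :
    ‖x‖ = Real.sqrt (x.ofLp ⬝ᵥ x.ofLp) := by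
  rw [norm_eq_sqrt_real_inner, EuclideanSpace.inner_eq_star_dotProduct, star_trivial]

theorem Matrix.PosSemidef.l2_opNorm_eq_iSup_dotProduct_mulVec {ι : Type*} [Fintype ι]
    [DecidableEq ι] {M : Matrix ι ι ℝ} (hM : M.PosSemidef) :
    ‖M‖ = ⨆ β : {β : ι → ℝ // Real.sqrt (β ⬝ᵥ β) ≤ 1}, β.1 ⬝ᵥ M *ᵥ β.1 := by
  have hT : (toEuclideanCLM (𝕜 := ℝ) M).IsPositive :=
    isPositive_toEuclideanLin_iff.mpr hM
  rw [← l2_opNorm_toEuclideanCLM, hT.norm_eq_iSup_reApplyInnerSelf]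
  refine ((WithLp.equiv 2 (ι → ℝ)).subtypeEquiv fun x ↦ ?_).iSup_congr fun x ↦ ?_
  · simp [EuclideanSpace.norm_eq_sqrt_dotProduct]
  · simp [ContinuousLinearMap.reApplyInnerSelf_apply, real_inner_comm, inner_toEuclideanCLM]

section Projection

variable {E : Type*} [NormedAddCommGroup E] [InnerProductSpace ℝ E]

theorem Submodule.iInf_norm_sub_sq_eq_of_inner_eq_zero {K : Submodule ℝ E} {u p : E}
    (hp : p ∈ K) (horth : ∀ w ∈ K, ⟪w, u - p⟫ = 0) :
    ⨅ w : K, ‖(w : E) - u‖ ^ 2 = ‖u - p‖ ^ 2 := by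
  have pythagoras (w : K) : ‖(w : E) - u‖ ^ 2 = ‖(w : E) - p‖ ^ 2 + ‖u - p‖ ^ 2 := by
    have h := norm_sub_sq_eq_norm_sq_add_norm_sq_real (horth _ (K.sub_mem w.2 hp))
    rw [sub_sub_sub_cancel_right] at h
    rw [sq, sq, sq, h]
  refine le_antisymm ?_ (le_ciInf fun w ↦ ?_)
  · rw [← norm_sub_rev]
    exact ciInf_le (f := fun w : K ↦ ‖(w : E) - u‖ ^ 2)
      ⟨0, Set.forall_mem_range.mpr fun _ ↦ sq_nonneg _⟩ ⟨p, hp⟩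
  · rw [pythagoras]
    exact le_add_of_nonneg_left (sq_nonneg _)

theorem iInf_norm_sub_sq_span_eq {ι : Type*} [Fintype ι] [DecidableEq ι] {g : ι → E}
    (hg : LinearIndependent ℝ g) (u : E) :
    ⨅ v : Submodule.span ℝ (Set.range g), ‖(v : E) - u‖ ^ 2 =
      ‖u‖ ^ 2 - (fun j ↦ ⟪g j, u⟫) ⬝ᵥ (gram ℝ g)⁻¹ *ᵥ fun j ↦ ⟪g j, u⟫ := by
  set b : ι → ℝ := fun j ↦ ⟪g j, u⟫
  set c := (gram ℝ g)⁻¹ *ᵥ b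
  set p := ∑ j, c j • g j
  have hdet : IsUnit (gram ℝ g).det :=
    (isUnit_iff_isUnit_det _).mp (posDef_gram_of_linearIndependent hg).isUnit
  have hc : gram ℝ g *ᵥ c = b := by
    rw [mulVec_mulVec, mul_nonsing_inv _ hdet, one_mulVec]
  have hp : p ∈ Submodule.span ℝ (Set.range g) :=
    Submodule.sum_smul_mem _ _ fun j _ ↦ Submodule.subset_span (Set.mem_range_self j)
  have hgp (j : ι) : ⟪g j, p⟫ = b j := by
    simp only [p, ← hc, inner_sum, real_inner_smul_right, mulVec, dotProduct, gram_apply, mul_comm]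
  have horth (w : E) (hw : w ∈ Submodule.span ℝ (Set.range g)) : ⟪w, u - p⟫ = 0 := by
    refine Submodule.mem_orthogonal_singleton_iff_inner_left.mp (Submodule.span_le.mpr ?_ hw)
    refine Set.range_subset_iff.mpr fun j ↦ ?_
    rw [SetLike.mem_coe, Submodule.mem_orthogonal_singleton_iff_inner_left, inner_sub_right, hgp,
      sub_self]
  have hpu : ⟪p, u⟫ = b ⬝ᵥ c := by
    simp only [p, sum_inner, real_inner_smul_left, dotProduct, b, mul_comm]
  rw [Submodule.iInf_norm_sub_sq_eq_of_inner_eq_zero hp horth]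
  calc ‖u - p‖ ^ 2 = ⟪u - p, u⟫ - ⟪p, u - p⟫ := by
        rw [← real_inner_self_eq_norm_sq, inner_sub_right, real_inner_comm p]
    _ = ‖u‖ ^ 2 - b ⬝ᵥ c := by
        rw [horth p hp, sub_zero, inner_sub_left, hpu, real_inner_self_eq_norm_sq]

end Projection

section Nystrom

variable {E ι κ : Type*} [NormedAddCommGroup E] [InnerProductSpace ℝ E]
  [Fintype ι] [Fintype κ] [DecidableEq κ]

theorem iInf_norm_sub_sum_smul_sq_span_eq (k : ι → E) {g : κ → E} (hg : LinearIndependent ℝ g)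
    (A : Matrix ι κ ℝ) (hA : ∀ i j, A i j = ⟪k i, g j⟫) (β : ι → ℝ) :
    ⨅ v : Submodule.span ℝ (Set.range g), ‖(v : E) - ∑ i, β i • k i‖ ^ 2 =
      β ⬝ᵥ (gram ℝ k - A * (gram ℝ g)⁻¹ * Aᵀ) *ᵥ β := by
  have hb : (fun j ↦ ⟪g j, ∑ i, β i • k i⟫) = Aᵀ *ᵥ β := by
    ext j
    simp only [inner_sum, real_inner_smul_right, mulVec, dotProduct, transpose_apply, hA,
      real_inner_comm, mul_comm]
  have hu : ‖∑ i, β i • k i‖ ^ 2 = β ⬝ᵥ gram ℝ k *ᵥ β := by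
    rw [← real_inner_self_eq_norm_sq, ← star_dotProduct_gram_mulVec, star_trivial]
  rw [iInf_norm_sub_sq_span_eq hg, hb, hu, sub_mulVec, dotProduct_sub, ← mulVec_mulVec,
    ← mulVec_mulVec, dotProduct_mulVec β A, ← mulVec_transpose]

theorem posSemidef_gram_sub_mul_inv_gram_mul_transpose (k : ι → E) {g : κ → E}
    (hg : LinearIndependent ℝ g) (A : Matrix ι κ ℝ) (hA : ∀ i j, A i j = ⟪k i, g j⟫) :
    (gram ℝ k - A * (gram ℝ g)⁻¹ * Aᵀ).PosSemidef := by
  refine .of_dotProduct_mulVec_nonneg ?_ fun β ↦ ?_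
  · rw [← conjTranspose_eq_transpose_of_trivial]
    exact (isHermitian_gram ℝ k).sub
      (isHermitian_mul_mul_conjTranspose A (isHermitian_gram ℝ g).inv)
  · rw [star_trivial, ← iInf_norm_sub_sum_smul_sq_span_eq k hg A hA]
    exact le_ciInf fun _ ↦ sq_nonneg _

end Nystrom

/-- The spectral norm of the Nyström residual equals the
worst-case approximation error:
`‖G − AΘ⁻¹Aᵀ‖ = sup_{‖β‖ ≤ 1} inf_{v ∈ span g} ‖v − ∑ᵢ βᵢ kᵢ‖²`. -/
theorem stmt_13 {H : Type*}
    [NormedAddCommGroup H] [InnerProductSpace ℝ H]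
    {n m : ℕ} (k : Fin n → H) (g : Fin m → H)
    (hg : LinearIndependent ℝ g)
    (G : Matrix (Fin n) (Fin n) ℝ) (hG : ∀ i j, G i j = ⟪k i, k j⟫)
    (Θ : Matrix (Fin m) (Fin m) ℝ) (hΘ : ∀ i j, Θ i j = ⟪g i, g j⟫)
    (A : Matrix (Fin n) (Fin m) ℝ) (hA : ∀ i j, A i j = ⟪k i, g j⟫) :
    ‖G - A * Θ⁻¹ * Aᵀ‖ =
      ⨆ β : {β : Fin n → ℝ // Real.sqrt (β ⬝ᵥ β) ≤ 1},
        ⨅ v : Submodule.span ℝ (Set.range g),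
          ‖(v : H) - ∑ i, β.1 i • k i‖ ^ 2 := by
  obtain rfl : G = gram ℝ k := Matrix.ext hG
  obtain rfl : Θ = gram ℝ g := Matrix.ext hΘ
  rw [(posSemidef_gram_sub_mul_inv_gram_mul_transpose k hg A hA)
    |>.l2_opNorm_eq_iSup_dotProduct_mulVec]
  exact iSup_congr fun β ↦ (iInf_norm_sub_sum_smul_sq_span_eq k hg A hA β.1).symm
end

section
/- Let V ⊆ H be a nonempty subset and let r₁ ∈ {0, …, R₁} and r₂ ∈ {0, …, R₂}. Then sup_{‖b‖² + ‖b'‖² ≤ 1} d(u(b, b'), V) ≤ 2·sup_{‖b‖² + ‖b'‖² ≤ 1, b_j = 0 for j > r₁, b'_j = 0 for j > r₂} d(u(b, b'), V) + 4·λ_{r₁+1} + 4·τ_{r₂+1}, with the conventions λ_{R₁+1} = 0 and τ_{R₂+1} = 0. -/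
open Matrix
open scoped RealInnerProductSpace

/-! Since `⟪∑ᵢ aᵢ kᵢ, ∑ⱼ cⱼ kⱼ⟫ = a ⬝ᵥ G c`, the eigenvectors of the Gram matrix make the `e j`
pairwise orthogonal with `‖e j‖² = λ j` (likewise `f j` and `τ j`). Cutting the coefficients of
`u(b, b')` off after `r₁` and `r₂` keeps them in the unit ball and, the eigenvalues being
decreasing, moves `u(b, b')` by a vector of squared norm at most `2 λ_{r₁+1} + 2 τ_{r₂+1}`.
Conclude with `d(x, V) ≤ 2 d(y, V) + 2 ‖x - y‖²`. -/

section NormedGroup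

variable {E : Type*} [SeminormedAddCommGroup E]

lemma norm_add_sq_le_two_mul (x y : E) : ‖x + y‖ ^ 2 ≤ 2 * (‖x‖ ^ 2 + ‖y‖ ^ 2) :=
  (pow_le_pow_left₀ (norm_nonneg _) (norm_add_le x y) 2).trans add_sq_le

lemma iInf_norm_sub_sq_le {V : Set E} [Nonempty V] (x y : E) :
    ⨅ v : V, ‖(v : E) - x‖ ^ 2 ≤ 2 * (⨅ v : V, ‖(v : E) - y‖ ^ 2) + 2 * ‖x - y‖ ^ 2 := by
  have hbdd : BddBelow (Set.range fun v : V => ‖(v : E) - x‖ ^ 2) :=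
    ⟨0, by rintro _ ⟨v, rfl⟩; positivity⟩
  suffices ∀ v : V, ((⨅ w : V, ‖(w : E) - x‖ ^ 2) - 2 * ‖x - y‖ ^ 2) / 2 ≤ ‖(v : E) - y‖ ^ 2 by
    linarith [le_ciInf this]
  intro v
  have := norm_add_sq_le_two_mul ((v : E) - y) (y - x)
  rw [sub_add_sub_cancel, norm_sub_rev y x] at this
  linarith [ciInf_le hbdd v]

lemma bddAbove_range_iInf_norm_sub_sq {V : Set E} [Nonempty V] {ι : Type*} {h : ι → E} {C : ℝ}
    (hC : ∀ i, ‖h i‖ ^ 2 ≤ C) : BddAbove (Set.range fun i => ⨅ v : V, ‖(v : E) - h i‖ ^ 2) := by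
  refine ⟨2 * (⨅ v : V, ‖(v : E) - 0‖ ^ 2) + 2 * C, Set.forall_mem_range.2 fun i => ?_⟩
  refine (iInf_norm_sub_sq_le _ 0).trans ?_
  rw [sub_zero]
  gcongr
  exact hC i

end NormedGroup

section DotProduct

variable {R : Type*} [Ring R] [LinearOrder R] [IsStrictOrderedRing R] {ι : Type*} [Fintype ι]

lemma dotProduct_self_nonneg (b : ι → R) : 0 ≤ b ⬝ᵥ b :=
  Finset.sum_nonneg fun j _ => mul_self_nonneg (b j)

lemma dotProduct_self_indicator_le (s : Set ι) (b : ι → R) :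
    s.indicator b ⬝ᵥ s.indicator b ≤ b ⬝ᵥ b :=
  Finset.sum_le_sum fun j _ => by by_cases hj : j ∈ s <;> simp [hj, mul_self_nonneg]

end DotProduct

section Gram

variable {H : Type*} [NormedAddCommGroup H] [InnerProductSpace ℝ H] {ι : Type*} [Fintype ι]

lemma inner_sum_smul_sum_smul_eq_dotProduct_mulVec (k : ι → H) {G : Matrix ι ι ℝ}
    (hG : ∀ i j, G i j = ⟪k i, k j⟫) (a c : ι → ℝ) :
    ⟪∑ i, a i • k i, ∑ j, c j • k j⟫ = a ⬝ᵥ (G *ᵥ c) := by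
  simp only [sum_inner, inner_sum, real_inner_smul_left, real_inner_smul_right, dotProduct,
    mulVec, hG, Finset.mul_sum]
  rw [Finset.sum_comm]
  exact Finset.sum_congr rfl fun i _ => Finset.sum_congr rfl fun j _ => by ring

lemma inner_sum_eigenvector_smul [DecidableEq ι] (k : ι → H) {G : Matrix ι ι ℝ}
    (hG : ∀ i j, G i j = ⟪k i, k j⟫) {v : ι → ι → ℝ}
    (hv : ∀ j j', v j ⬝ᵥ v j' = if j = j' then 1 else 0) {μ : ι → ℝ}
    (hGv : ∀ j, G *ᵥ v j = μ j • v j) (j j' : ι) :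
    ⟪∑ i, v j i • k i, ∑ i, v j' i • k i⟫ = if j = j' then μ j else 0 := by
  rw [inner_sum_smul_sum_smul_eq_dotProduct_mulVec k hG, hGv, dotProduct_smul, hv, smul_eq_mul]
  split_ifs with h <;> simp [h]

lemma norm_sum_smul_sq_of_inner_eq_ite [DecidableEq ι] {g : ι → H} {μ : ι → ℝ}
    (hg : ∀ i j, ⟪g i, g j⟫ = if i = j then μ i else 0) (c : ι → ℝ) :
    ‖∑ j, c j • g j‖ ^ 2 = ∑ j, c j ^ 2 * μ j := by
  simp only [← real_inner_self_eq_norm_sq, sum_inner, inner_sum, real_inner_smul_left,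
    real_inner_smul_right, hg, mul_ite, mul_zero, Finset.sum_ite_eq', Finset.mem_univ, if_true]
  exact Finset.sum_congr rfl fun j _ => by ring

lemma norm_sum_smul_sq_le_of_antitone {n : ℕ} {g : Fin n → H} {μ : Fin n → ℝ}
    (hg : ∀ i j, ⟪g i, g j⟫ = if i = j then μ i else 0) (hμ : Antitone μ)
    {c : Fin n → ℝ} (hc : c ⬝ᵥ c ≤ 1) {r : ℕ} (hcr : ∀ j : Fin n, (j : ℕ) < r → c j = 0) :
    ‖∑ j, c j • g j‖ ^ 2 ≤ if h : r < n then μ ⟨r, h⟩ else 0 := by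
  rw [norm_sum_smul_sq_of_inner_eq_ite hg]
  split_ifs with hr
  · have hμr : 0 ≤ μ ⟨r, hr⟩ := by
      have := hg ⟨r, hr⟩ ⟨r, hr⟩
      rw [if_pos rfl] at this
      exact this ▸ real_inner_self_nonneg
    calc ∑ j, c j ^ 2 * μ j ≤ ∑ j, c j ^ 2 * μ ⟨r, hr⟩ := Finset.sum_le_sum fun j _ => ?_
      _ = (c ⬝ᵥ c) * μ ⟨r, hr⟩ := by simp [dotProduct, sq, Finset.sum_mul]
      _ ≤ μ ⟨r, hr⟩ := mul_le_of_le_one_left hμr hc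
    rcases lt_or_ge (j : ℕ) r with hj | hj
    · simp [hcr j hj]
    · exact mul_le_mul_of_nonneg_left (hμ (show (⟨r, hr⟩ : Fin n) ≤ j from hj)) (sq_nonneg _)
  · simp [show c = 0 from funext fun j => hcr j (by omega)]

lemma norm_sum_smul_add_sum_smul_sq_le {m n : ℕ} {g : Fin m → H} {g' : Fin n → H}
    {μ : Fin m → ℝ} {μ' : Fin n → ℝ}
    (hg : ∀ i j, ⟪g i, g j⟫ = if i = j then μ i else 0)
    (hg' : ∀ i j, ⟪g' i, g' j⟫ = if i = j then μ' i else 0) (hμ : Antitone μ) (hμ' : Antitone μ')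
    {c : Fin m → ℝ} {c' : Fin n → ℝ} (hcc' : c ⬝ᵥ c + c' ⬝ᵥ c' ≤ 1) {s s' : ℕ}
    (hcs : ∀ j : Fin m, (j : ℕ) < s → c j = 0) (hcs' : ∀ j : Fin n, (j : ℕ) < s' → c' j = 0) :
    ‖∑ j, c j • g j + ∑ j, c' j • g' j‖ ^ 2 ≤
      2 * ((if h : s < m then μ ⟨s, h⟩ else 0) + if h : s' < n then μ' ⟨s', h⟩ else 0) := by
  refine (norm_add_sq_le_two_mul _ _).trans ?_
  gcongr
  · exact norm_sum_smul_sq_le_of_antitone hg hμ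
      (le_of_add_le_of_nonneg_left hcc' (dotProduct_self_nonneg c')) hcs
  · exact norm_sum_smul_sq_le_of_antitone hg' hμ'
      (le_of_add_le_of_nonneg_right hcc' (dotProduct_self_nonneg c)) hcs'

end Gram

theorem stmt_17_general {H : Type*}
    [NormedAddCommGroup H] [InnerProductSpace ℝ H]
    {R₁ R₂ : ℕ} (k : Fin R₁ → H) (k' : Fin R₂ → H)
    (G : Matrix (Fin R₁) (Fin R₁) ℝ) (hG : ∀ i j, G i j = ⟪k i, k j⟫)
    (G' : Matrix (Fin R₂) (Fin R₂) ℝ) (hG' : ∀ i j, G' i j = ⟪k' i, k' j⟫)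
    (v : Fin R₁ → Fin R₁ → ℝ)
    (hvON : ∀ j j', v j ⬝ᵥ v j' = if j = j' then 1 else 0)
    (lam : Fin R₁ → ℝ)
    (hlam_mono : ∀ j j' : Fin R₁, j ≤ j' → lam j' ≤ lam j)
    (hveig : ∀ j, G *ᵥ v j = lam j • v j)
    (w : Fin R₂ → Fin R₂ → ℝ)
    (hwON : ∀ j j', w j ⬝ᵥ w j' = if j = j' then 1 else 0)
    (tau : Fin R₂ → ℝ)
    (htau_mono : ∀ j j' : Fin R₂, j ≤ j' → tau j' ≤ tau j)
    (hweig : ∀ j, G' *ᵥ w j = tau j • w j)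
    (e : Fin R₁ → H) (he : ∀ j, e j = ∑ i, v j i • k i)
    (f : Fin R₂ → H) (hf : ∀ j, f j = ∑ i, w j i • k' i)
    (u : (Fin R₁ → ℝ) → (Fin R₂ → ℝ) → H)
    (hu : ∀ b b', u b b' = ∑ j, b j • e j + ∑ j, b' j • f j)
    (V : Set H) (hV : V.Nonempty)
    (r₁ r₂ : ℕ) :
    (⨆ p : {p : (Fin R₁ → ℝ) × (Fin R₂ → ℝ) //
        p.1 ⬝ᵥ p.1 + p.2 ⬝ᵥ p.2 ≤ 1},
      ⨅ x : V, ‖(x : H) - u p.1.1 p.1.2‖ ^ 2) ≤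
    2 * (⨆ p : {p : (Fin R₁ → ℝ) × (Fin R₂ → ℝ) //
        p.1 ⬝ᵥ p.1 + p.2 ⬝ᵥ p.2 ≤ 1 ∧
        (∀ i : Fin R₁, r₁ ≤ (i : ℕ) → p.1 i = 0) ∧
        (∀ i : Fin R₂, r₂ ≤ (i : ℕ) → p.2 i = 0)},
      ⨅ x : V, ‖(x : H) - u p.1.1 p.1.2‖ ^ 2)
    + 4 * (if h : r₁ < R₁ then lam ⟨r₁, h⟩ else 0)
    + 4 * (if h : r₂ < R₂ then tau ⟨r₂, h⟩ else 0) := by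
  have := hV.to_subtype
  have hee : ∀ i j, ⟪e i, e j⟫ = if i = j then lam i else 0 := fun i j => by
    rw [he, he]; exact inner_sum_eigenvector_smul k hG hvON hveig i j
  have hff : ∀ i j, ⟪f i, f j⟫ = if i = j then tau i else 0 := fun i j => by
    rw [hf, hf]; exact inner_sum_eigenvector_smul k' hG' hwON hweig i j
  have hu_le : ∀ {c c'} {s s' : ℕ}, c ⬝ᵥ c + c' ⬝ᵥ c' ≤ 1 →
      (∀ j : Fin R₁, (j : ℕ) < s → c j = 0) → (∀ j : Fin R₂, (j : ℕ) < s' → c' j = 0) →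
      ‖u c c'‖ ^ 2 ≤ 2 * ((if h : s < R₁ then lam ⟨s, h⟩ else 0) +
        if h : s' < R₂ then tau ⟨s', h⟩ else 0) := fun hcc' hcs hcs' => by
    rw [hu]
    exact norm_sum_smul_add_sum_smul_sq_le hee hff hlam_mono htau_mono hcc' hcs hcs'
  refine @ciSup_le _ _ _ ⟨⟨0, by simp⟩⟩ _ _ fun ⟨(b, b'), hbb'⟩ => ?_
  have hmasked (t₁ : Set (Fin R₁)) (t₂ : Set (Fin R₂)) :
      t₁.indicator b ⬝ᵥ t₁.indicator b + t₂.indicator b' ⬝ᵥ t₂.indicator b' ≤ 1 :=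
    (add_le_add (dotProduct_self_indicator_le t₁ b) (dotProduct_self_indicator_le t₂ b')).trans hbb'
  set s₁ : Set (Fin R₁) := {j | (j : ℕ) < r₁}
  set s₂ : Set (Fin R₂) := {j | (j : ℕ) < r₂}
  have hsplit : u b b' - u (s₁.indicator b) (s₂.indicator b') =
      u (s₁ᶜ.indicator b) (s₂ᶜ.indicator b') := by
    simp only [hu, Set.indicator_compl, Pi.sub_apply, sub_smul, Finset.sum_sub_distrib]
    abel
  refine (iInf_norm_sub_sq_le _ (u (s₁.indicator b) (s₂.indicator b'))).trans ?_
  rw [hsplit, add_assoc]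
  gcongr 2 * ?_ + ?_
  · refine le_ciSup_of_le ?_ ⟨(s₁.indicator b, s₂.indicator b'), hmasked s₁ s₂, ?_, ?_⟩ le_rfl
    -- cutoff `0` constrains nothing, so `hu_le` bounds `‖u‖²` on the whole ball
    · exact bddAbove_range_iInf_norm_sub_sq fun p =>
        hu_le (s := 0) (s' := 0) p.2.1 (by simp) (by simp)
    · exact fun i hi => Set.indicator_of_notMem (s := s₁) (not_lt.2 hi) b
    · exact fun i hi => Set.indicator_of_notMem (s := s₂) (not_lt.2 hi) b'
  · linarith [hu_le (s := r₁) (s' := r₂) (hmasked s₁ᶜ s₂ᶜ)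
      (fun j hj => Set.indicator_of_notMem (s := s₁ᶜ) (Set.notMem_compl_iff.2 hj) b)
      (fun j hj => Set.indicator_of_notMem (s := s₂ᶜ) (Set.notMem_compl_iff.2 hj) b')]

/-- Truncation bound: for a nonempty `V ⊆ H` and truncation
levels `r₁ ≤ R₁`, `r₂ ≤ R₂`,
`sup_{‖b‖²+‖b'‖²≤1} d(u(b,b'), V) ≤ 2·sup_{‖b‖²+‖b'‖²≤1, bⱼ=0 for j>r₁, b'ⱼ=0 for j>r₂} d(u(b,b'), V) + 4λ_{r₁+1} + 4τ_{r₂+1}`,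
with the conventions `λ_{R₁+1} = 0`, `τ_{R₂+1} = 0`, where
`d(h, V) = inf_{v ∈ V} ‖v − h‖²`. -/
theorem stmt_17 {H : Type*}
    [NormedAddCommGroup H] [InnerProductSpace ℝ H] [CompleteSpace H]
    {R₁ R₂ : ℕ} (k : Fin R₁ → H) (k' : Fin R₂ → H)
    (hk : LinearIndependent ℝ k) (hk' : LinearIndependent ℝ k')
    (G : Matrix (Fin R₁) (Fin R₁) ℝ) (hG : ∀ i j, G i j = ⟪k i, k j⟫)
    (G' : Matrix (Fin R₂) (Fin R₂) ℝ) (hG' : ∀ i j, G' i j = ⟪k' i, k' j⟫)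
    (v : Fin R₁ → Fin R₁ → ℝ)
    (hvON : ∀ j j', v j ⬝ᵥ v j' = if j = j' then 1 else 0)
    (lam : Fin R₁ → ℝ) (hlam_pos : ∀ j, 0 < lam j)
    (hlam_mono : ∀ j j' : Fin R₁, j ≤ j' → lam j' ≤ lam j)
    (hveig : ∀ j, G *ᵥ v j = lam j • v j)
    (w : Fin R₂ → Fin R₂ → ℝ)
    (hwON : ∀ j j', w j ⬝ᵥ w j' = if j = j' then 1 else 0)
    (tau : Fin R₂ → ℝ) (htau_pos : ∀ j, 0 < tau j)
    (htau_mono : ∀ j j' : Fin R₂, j ≤ j' → tau j' ≤ tau j)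
    (hweig : ∀ j, G' *ᵥ w j = tau j • w j)
    (e : Fin R₁ → H) (he : ∀ j, e j = ∑ i, v j i • k i)
    (f : Fin R₂ → H) (hf : ∀ j, f j = ∑ i, w j i • k' i)
    (u : (Fin R₁ → ℝ) → (Fin R₂ → ℝ) → H)
    (hu : ∀ b b', u b b' = ∑ j, b j • e j + ∑ j, b' j • f j)
    (V : Set H) (hV : V.Nonempty)
    (r₁ r₂ : ℕ) (hr₁ : r₁ ≤ R₁) (hr₂ : r₂ ≤ R₂) :
    (⨆ p : {p : (Fin R₁ → ℝ) × (Fin R₂ → ℝ) //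
        p.1 ⬝ᵥ p.1 + p.2 ⬝ᵥ p.2 ≤ 1},
      ⨅ x : V, ‖(x : H) - u p.1.1 p.1.2‖ ^ 2) ≤
    2 * (⨆ p : {p : (Fin R₁ → ℝ) × (Fin R₂ → ℝ) //
        p.1 ⬝ᵥ p.1 + p.2 ⬝ᵥ p.2 ≤ 1 ∧
        (∀ i : Fin R₁, r₁ ≤ (i : ℕ) → p.1 i = 0) ∧
        (∀ i : Fin R₂, r₂ ≤ (i : ℕ) → p.2 i = 0)},
      ⨅ x : V, ‖(x : H) - u p.1.1 p.1.2‖ ^ 2)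
    + 4 * (if h : r₁ < R₁ then lam ⟨r₁, h⟩ else 0)
    + 4 * (if h : r₂ < R₂ then tau ⟨r₂, h⟩ else 0) :=
  stmt_17_general k k' G hG G' hG' v hvON lam hlam_mono hveig w hwON tau htau_mono hweig e he f hf u
    hu V hV r₁ r₂
end
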